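/- Let μ be a probability measure on ℝ and λ ∈ (0,1). Then scaling all free cumulants of μ by λ need not yield a positive distribution: if μ = (δ_{-1} + δ_{1})/2, then for every λ ∈ (0,1) there is no probability measure whose free cumulants equal λ times the free cumulants of μ. -/

import Mathlib

/-!
The symmetric Bernoulli law has free cumulants `κ₁ = 0`, `κ₂ = 1`, `κ₄ = -1`. A measure `ν` with
cumulants `l • κ` would then have second moment `l` and fourth moment `2 l² - l`; but
`Var[X²] ≥ 0` forces `m₂² ≤ m₄`, i.e. `l ≤ l²`, which fails for `0 < l < 1`.
-/

open MeasureTheory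
open scoped ENNReal

/-- The free moment–cumulant relation for a (scalar) moment sequence `m` and cumulant
sequence `κ`: `m 0 = 1` and, for `n ≥ 1`,
`mₙ = Σ_{s=1}^n κ_s Σ_{i₁+⋯+i_s = n-s} m_{i₁} ⋯ m_{i_s}`
(the standard recursion equivalent to the sum over non-crossing partitions
`mₙ = Σ_{π ∈ NC(n)} Π_{V ∈ π} κ_{|V|}`). -/
def MomCumRel (m κ : ℕ → ℝ) : Prop :=
  m 0 = 1 ∧ ∀ n : ℕ, 1 ≤ n →
    m n = ∑ s ∈ Finset.Icc 1 n, κ s *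
      ∑ v ∈ Finset.Nat.antidiagonalTuple s (n - s), ∏ i, m (v i)

namespace MomCumRel

variable {m κ : ℕ → ℝ}

theorem moment_one (h : MomCumRel m κ) : m 1 = κ 1 := by
  simpa [h.1] using h.2 1 le_rfl

theorem moment_two (h : MomCumRel m κ) : m 2 = κ 2 + κ 1 ^ 2 := by
  rw [h.2 2 (by norm_num)]
  simp [Finset.sum_Icc_succ_top, Fin.prod_univ_succ, h.1, h.moment_one, Finset.Nat.antidiagonalTuple,
    Multiset.Nat.antidiagonalTuple, List.Nat.antidiagonalTuple, List.Nat.antidiagonal_succ]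
  ring

theorem moment_three (h : MomCumRel m κ) : m 3 = κ 3 + 3 * κ 2 * κ 1 + κ 1 ^ 3 := by
  rw [h.2 3 (by norm_num)]
  simp [Finset.sum_Icc_succ_top, Fin.prod_univ_succ, h.1, h.moment_one, h.moment_two,
    Finset.Nat.antidiagonalTuple, Multiset.Nat.antidiagonalTuple, List.Nat.antidiagonalTuple,
    List.Nat.antidiagonal_succ]
  ring

theorem moment_four (h : MomCumRel m κ) :
    m 4 = κ 4 + 4 * κ 3 * κ 1 + 2 * κ 2 ^ 2 + 6 * κ 2 * κ 1 ^ 2 + κ 1 ^ 4 := by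
  rw [h.2 4 (by norm_num)]
  simp [Finset.sum_Icc_succ_top, Fin.prod_univ_succ, h.1, h.moment_one, h.moment_two,
    h.moment_three, Finset.Nat.antidiagonalTuple, Multiset.Nat.antidiagonalTuple,
    List.Nat.antidiagonalTuple, List.Nat.antidiagonal_succ]
  ring

end MomCumRel

theorem integral_smul_dirac_add_dirac (f : ℝ → ℝ) (a b : ℝ) :
    ∫ x, f x ∂((2⁻¹ : ℝ≥0∞) • (Measure.dirac a + Measure.dirac b)) = (f a + f b) / 2 := by
  rw [integral_smul_measure, integral_add_measure (integrable_dirac (by simp))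
    (integrable_dirac (by simp)), integral_dirac, integral_dirac]
  simp [div_eq_inv_mul]

open ProbabilityTheory in
theorem sq_integral_le_integral_sq {Ω : Type*} [MeasurableSpace Ω] {μ : Measure Ω}
    [IsProbabilityMeasure μ] {X : Ω → ℝ} (hX : MemLp X 2 μ) : μ[X] ^ 2 ≤ μ[X ^ 2] := by
  have hvar := variance_nonneg X μ
  rw [variance_eq_sub hX] at hvar
  linarith

/-- let `μ = (δ₋₁ + δ₁)/2` and `0 < l < 1`.  There is no probability measure
on `ℝ` whose free cumulants are `l` times the free cumulants of `μ`: the `l`-th free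
convolution power of the symmetric Bernoulli distribution does not exist for `l < 1`. -/
theorem no_fractional_free_power_of_bernoulli
    (μ : Measure ℝ) (hμ : μ = (2⁻¹ : ℝ≥0∞) • (Measure.dirac (-1) + Measure.dirac 1))
    (κ : ℕ → ℝ) (hκ : MomCumRel (fun n => ∫ x, x ^ n ∂μ) κ)
    (l : ℝ) (hl0 : 0 < l) (hl1 : l < 1) :
    ¬ ∃ ν : Measure ℝ, IsProbabilityMeasure ν ∧
        (∀ n : ℕ, Integrable (fun x => x ^ n) ν) ∧
        MomCumRel (fun n => ∫ x, x ^ n ∂ν) (fun n => l * κ n) := by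
  rintro ⟨ν, hν, hint, hνκ⟩
  subst hμ
  simp only [integral_smul_dirac_add_dirac] at hκ
  have hκ1 : κ 1 = 0 := by simpa using hκ.moment_one.symm
  have hκ2 : κ 2 = 1 := by simpa [hκ1] using hκ.moment_two.symm
  have hκ4 : κ 4 = -1 := by
    have h4 := hκ.moment_four
    norm_num [hκ1, hκ2] at h4
    linarith
  have hm2 : ∫ x, x ^ 2 ∂ν = l := by simpa [hκ1, hκ2] using hνκ.moment_two
  have hm4 : ∫ x, x ^ 4 ∂ν = 2 * l ^ 2 - l := by simp [hνκ.moment_four, hκ1, hκ2, hκ4]; ring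
  have hsq : (∫ x, x ^ 2 ∂ν) ^ 2 ≤ ∫ x, x ^ 4 ∂ν := by
    have hX : MemLp (fun x : ℝ => x ^ 2) 2 ν :=
      (memLp_two_iff_integrable_sq (by fun_prop)).2 (by simpa [← pow_mul] using hint 4)
    simpa [← pow_mul] using sq_integral_le_integral_sq hX
  rw [hm2, hm4] at hsq
  nlinarith
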